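/- arXiv:1909.08233 — 2 statements merged into one kernel-verified Lean document; each statement's English description precedes it below -/
import Mathlib

section
/- Adding a tautological rule ⊥ ← a, ¬a, not ℓ (where not ℓ is an epistemic literal not appearing in Π and ℓ is a literal over an atom of 𝒜) to an ELP Π does not change its set of SE-CWVs: secwvs(Π) = secwvs(Π'). -/
/-- A rule of a ground logic program: head atoms, positive body atoms,
and negated body literals (a literal is an atom with a sign). -/
structure Rule (α : Type*) where
  head : Set α
  pbody : Set α
  nbody : Set (α × Bool)

variable {α : Type*}

/-- Satisfaction of a literal by an interpretation. -/
def satLit (I : Set α) (l : α × Bool) : Prop := (l.1 ∈ I ↔ l.2 = true)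

/-- An interpretation is a model of a rule. -/
def satRule (I : Set α) (r : Rule α) : Prop :=
  ((∀ a ∈ r.pbody, a ∈ I) ∧ (∀ l ∈ r.nbody, ¬ satLit I l)) → ∃ a ∈ r.head, a ∈ I

/-- Model of a program (set of rules). -/
def satProg (I : Set α) (P : Set (Rule α)) : Prop := ∀ r ∈ P, satRule I r

/-- X is a model of the GL-reduct of P w.r.t. Y. -/
def satReduct (X Y : Set α) (P : Set (Rule α)) : Prop :=
  ∀ r ∈ P, (∀ l ∈ r.nbody, ¬ satLit Y l) →
    ((∀ a ∈ r.pbody, a ∈ X) → ∃ a ∈ r.head, a ∈ X)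

/-- Answer sets of the program (𝒜, P). -/
def AS (𝒜 : Set α) (P : Set (Rule α)) : Set (Set α) :=
  {M | M ⊆ 𝒜 ∧ satProg M P ∧ ∀ M', M' ⊂ M → ¬ satReduct M' M P}

/-- Atoms occurring in a rule. -/
def ruleAtoms (r : Rule α) : Set α := r.head ∪ r.pbody ∪ Prod.fst '' r.nbody

/-- A rule of an epistemic logic program: head atoms, ordinary body literals,
epistemic body literals `not ℓ`, and negated epistemic body literals `¬ not ℓ`
(each epistemic literal is represented by the underlying literal ℓ). -/
structure ERule (α : Type*) where
  head : Set α
  obody : Set (α × Bool)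
  ebody : Set (α × Bool)
  nebody : Set (α × Bool)

def negLit (l : α × Bool) : α × Bool := (l.1, !l.2)

/-- Epistemic literals occurring in an ELP (represented by their literals). -/
def elit (R : Set (ERule α)) : Set (α × Bool) := ⋃ r ∈ R, r.ebody ∪ r.nebody

/-- Atoms occurring in an ELP rule. -/
def eruleAtoms (r : ERule α) : Set α :=
  r.head ∪ Prod.fst '' r.obody ∪ Prod.fst '' r.ebody ∪ Prod.fst '' r.nebody

/-- Epistemic reduct of a rule: each epistemic literal `not ℓ` with ℓ ∈ K is
replaced by the default negation ¬ℓ, all others by ⊤. -/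
def eRuleRed (r : ERule α) (K : Set (α × Bool)) : Rule α :=
  { head := r.head,
    pbody := {a | (a, true) ∈ r.obody},
    nbody := {l : α × Bool | l.2 = true ∧ (l.1, false) ∈ r.obody}
              ∪ (r.ebody ∩ K) ∪ negLit '' r.nebody }

/-- Epistemic reduct of an ELP: rules whose negated epistemic literals all get
replaced by ¬ℓ survive (otherwise the body contains ¬⊤ = ⊥ and the rule is
trivially true, hence dropped). For an epistemic guess Φ take K = Φᶜ; for a
candidate world interpretation I take K = I. -/
def eReduct (R : Set (ERule α)) (K : Set (α × Bool)) : Set (Rule α) :=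
  { p | ∃ r ∈ R, r.nebody ⊆ K ∧ p = eRuleRed r K }

/-- Shen-Eiter candidate world view. -/
def SECWV (𝒜 : Set α) (R : Set (ERule α)) (ℳ : Set (Set α)) : Prop :=
  ∃ Φ ⊆ elit R, ℳ = AS 𝒜 (eReduct R Φᶜ) ∧ ℳ.Nonempty ∧
    (∀ l ∈ Φ, ∃ M ∈ ℳ, ¬ satLit M l) ∧
    (∀ l ∈ elit R \ Φ, ∀ M ∈ ℳ, satLit M l)

/-- A consistent set of literals. -/
def consistent (I : Set (α × Bool)) : Prop := ∀ a, ¬((a, true) ∈ I ∧ (a, false) ∈ I)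

/-- Candidate world interpretation over atoms 𝒜. -/
def CWI (𝒜 : Set α) (I : Set (α × Bool)) : Prop := consistent I ∧ ∀ l ∈ I, l.1 ∈ 𝒜

/-- Compatibility of a CWI with a set of interpretations. -/
def compatible (𝒜 : Set α) (I : Set (α × Bool)) (ℐ : Set (Set α)) : Prop :=
  ℐ.Nonempty ∧
  (∀ a, (a, true) ∈ I → ∀ J ∈ ℐ, a ∈ J) ∧
  (∀ a, (a, false) ∈ I → ∀ J ∈ ℐ, a ∉ J) ∧
  (∀ a ∈ 𝒜, (a, true) ∉ I → (a, false) ∉ I → (∃ J ∈ ℐ, a ∈ J) ∧ (∃ J ∈ ℐ, a ∉ J))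

/-- Candidate world view: a CWI compatible with the answer sets of its
epistemic reduct. -/
def CWV (𝒜 : Set α) (R : Set (ERule α)) (I : Set (α × Bool)) : Prop :=
  CWI 𝒜 I ∧ compatible 𝒜 I (AS 𝒜 (eReduct R I))

section Aux

variable {α : Type*}

def tautRule (ℓ : α × Bool) : ERule α := ⟨∅, {(ℓ.1, true), (ℓ.1, false)}, {ℓ}, ∅⟩

lemma mem_elit {R : Set (ERule α)} {r : ERule α} (hr : r ∈ R) {l : α × Bool}
    (hl : l ∈ r.ebody ∪ r.nebody) : l ∈ elit R :=
  Set.mem_biUnion hr hl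

lemma elit_union_taut (R : Set (ERule α)) (ℓ : α × Bool) :
    elit (R ∪ {tautRule ℓ}) = elit R ∪ {ℓ} := by
  simp [elit, Set.biUnion_union, tautRule]

lemma eRuleRed_congr {r : ERule α} {K K' : Set (α × Bool)}
    (h : r.ebody ∩ K = r.ebody ∩ K') : eRuleRed r K = eRuleRed r K' := by
  simp only [eRuleRed, h]

lemma eReduct_congr {R : Set (ERule α)} {K K' : Set (α × Bool)}
    (h : ∀ l ∈ elit R, (l ∈ K ↔ l ∈ K')) : eReduct R K = eReduct R K' := by
  have hcap : ∀ r ∈ R, r.ebody ∩ K = r.ebody ∩ K' := by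
    intro r hr
    ext l
    simp only [Set.mem_inter_iff]
    exact and_congr_right fun hl => h l (mem_elit hr (Or.inl hl))
  ext p
  constructor
  · rintro ⟨r, hr, hsub, rfl⟩
    exact ⟨r, hr, fun l hl => (h l (mem_elit hr (Or.inr hl))).mp (hsub hl),
      eRuleRed_congr (hcap r hr)⟩
  · rintro ⟨r, hr, hsub, rfl⟩
    exact ⟨r, hr, fun l hl => (h l (mem_elit hr (Or.inr hl))).mpr (hsub hl),
      (eRuleRed_congr (hcap r hr)).symm⟩

lemma eReduct_union_taut (R : Set (ERule α)) (ℓ : α × Bool) (K : Set (α × Bool)) :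
    eReduct (R ∪ {tautRule ℓ}) K = eReduct R K ∪ {eRuleRed (tautRule ℓ) K} := by
  ext p
  constructor
  · rintro ⟨r, hr | hr, hsub, rfl⟩
    · exact Or.inl ⟨r, hr, hsub, rfl⟩
    · exact Or.inr (by rw [Set.mem_singleton_iff.mp hr]; rfl)
  · rintro (⟨r, hr, hsub, rfl⟩ | hp)
    · exact ⟨r, Or.inl hr, hsub, rfl⟩
    · exact ⟨tautRule ℓ, Or.inr rfl, by simp [tautRule], hp⟩

lemma taut_pbody (ℓ : α × Bool) (K : Set (α × Bool)) :
    ℓ.1 ∈ (eRuleRed (tautRule ℓ) K).pbody := by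
  simp [eRuleRed, tautRule]

lemma taut_nbody (ℓ : α × Bool) (K : Set (α × Bool)) :
    (ℓ.1, true) ∈ (eRuleRed (tautRule ℓ) K).nbody := by
  exact Or.inl (Or.inl ⟨rfl, by simp [tautRule]⟩)

lemma taut_satRule (ℓ : α × Bool) (K : Set (α × Bool)) (I : Set α) :
    satRule I (eRuleRed (tautRule ℓ) K) := by
  rintro ⟨hp, hn⟩
  have h1 := hp ℓ.1 (taut_pbody ℓ K)
  exact absurd ⟨fun _ => rfl, fun _ => h1⟩ (hn (ℓ.1, true) (taut_nbody ℓ K))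

lemma AS_union_taut (𝒜 : Set α) (P : Set (Rule α)) (t : Rule α)
    (h1 : ∀ I, satRule I t)
    (h2 : ∀ X Y : Set α, X ⊆ Y → (∀ l ∈ t.nbody, ¬ satLit Y l) →
      ((∀ a ∈ t.pbody, a ∈ X) → ∃ a ∈ t.head, a ∈ X)) :
    AS 𝒜 (P ∪ {t}) = AS 𝒜 P := by
  have hp : ∀ M : Set α, satProg M (P ∪ {t}) ↔ satProg M P := fun M =>
    ⟨fun h r hr => h r (Or.inl hr),
     fun h r hr => hr.elim (h r) (fun he => Set.mem_singleton_iff.mp he ▸ h1 M)⟩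
  have hred : ∀ X Y : Set α, X ⊆ Y →
      (satReduct X Y (P ∪ {t}) ↔ satReduct X Y P) := fun X Y hXY =>
    ⟨fun h r hr => h r (Or.inl hr),
     fun h r hr => hr.elim (h r) (fun he => Set.mem_singleton_iff.mp he ▸ h2 X Y hXY)⟩
  ext M
  constructor
  · rintro ⟨hA, hs, hmin⟩
    exact ⟨hA, (hp M).mp hs,
      fun M' hM' hc => hmin M' hM' ((hred M' M hM'.subset).mpr hc)⟩
  · rintro ⟨hA, hs, hmin⟩
    exact ⟨hA, (hp M).mpr hs,
      fun M' hM' hc => hmin M' hM' ((hred M' M hM'.subset).mp hc)⟩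

lemma AS_eReduct_union_taut (𝒜 : Set α) (R : Set (ERule α)) (ℓ : α × Bool)
    (K : Set (α × Bool)) :
    AS 𝒜 (eReduct (R ∪ {tautRule ℓ}) K) = AS 𝒜 (eReduct R K) := by
  rw [eReduct_union_taut]
  refine AS_union_taut 𝒜 _ _ (taut_satRule ℓ K) ?_
  intro X Y hXY hn hp
  have hY : ℓ.1 ∉ Y := fun h => hn (ℓ.1, true) (taut_nbody ℓ K) ⟨fun _ => rfl, fun _ => h⟩
  exact absurd (hXY (hp ℓ.1 (taut_pbody ℓ K))) hY

end Aux

/-- adding the tautological rule ⊥ ← a, ¬a, not ℓ, where the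
epistemic literal not ℓ does not appear in Π and ℓ is a literal over an atom
a ∈ 𝒜, does not change the SE-CWVs. -/
theorem stmt10 (𝒜 : Set α) (R : Set (ERule α)) (ℓ : α × Bool)
    (hR : ∀ r ∈ R, eruleAtoms r ⊆ 𝒜)
    (hfresh : ℓ ∉ elit R) (hatom : ℓ.1 ∈ 𝒜) :
    {ℳ : Set (Set α) | SECWV 𝒜 R ℳ} =
    {ℳ : Set (Set α) |
      SECWV 𝒜 (R ∪ {⟨∅, {(ℓ.1, true), (ℓ.1, false)}, {ℓ}, ∅⟩}) ℳ} := by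
  have hRR : R ∪ {⟨∅, {(ℓ.1, true), (ℓ.1, false)}, {ℓ}, ∅⟩} = R ∪ {tautRule ℓ} := rfl
  rw [hRR]
  ext ℳ
  simp only [Set.mem_setOf_eq]
  constructor
  · rintro ⟨Φ, hΦ, hAS, hne, hpos, hneg⟩
    have hℓΦ : ℓ ∉ Φ := fun h => hfresh (hΦ h)
    by_cases hc : ∀ M ∈ ℳ, satLit M ℓ
    · refine ⟨Φ, hΦ.trans (by rw [elit_union_taut]; exact Set.subset_union_left), ?_, hne,
        hpos, ?_⟩
      · rw [AS_eReduct_union_taut]; exact hAS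
      · intro l hl M hM
        rw [elit_union_taut] at hl
        rcases hl.1 with h | h
        · exact hneg l ⟨h, hl.2⟩ M hM
        · exact Set.mem_singleton_iff.mp h ▸ hc M hM
    · push_neg at hc
      obtain ⟨M₀, hM₀, hM₀ℓ⟩ := hc
      refine ⟨Φ ∪ {ℓ}, ?_, ?_, hne, ?_, ?_⟩
      · rw [elit_union_taut]
        exact Set.union_subset_union hΦ le_rfl
      · rw [AS_eReduct_union_taut]
        rw [hAS]
        refine congrArg (AS 𝒜) (eReduct_congr fun l hl => ?_)
        have hlℓ : l ≠ ℓ := fun h => hfresh (h ▸ hl)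
        simp [Set.mem_compl_iff, hlℓ]
      · intro l hl
        rcases hl with h | h
        · exact hpos l h
        · exact Set.mem_singleton_iff.mp h ▸ ⟨M₀, hM₀, hM₀ℓ⟩
      · intro l hl M hM
        rw [elit_union_taut] at hl
        have hlR : l ∈ elit R := by
          rcases hl.1 with h | h
          · exact h
          · exact absurd (Or.inr h) hl.2
        exact hneg l ⟨hlR, fun h => hl.2 (Or.inl h)⟩ M hM
  · rintro ⟨Φ', hΦ', hAS, hne, hpos, hneg⟩
    refine ⟨Φ' \ {ℓ}, ?_, ?_, hne, ?_, ?_⟩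
    · intro l hl
      rcases (by rw [elit_union_taut] at hΦ'; exact hΦ' hl.1 : l ∈ elit R ∪ {ℓ}) with h | h
      · exact h
      · exact absurd h hl.2
    · rw [AS_eReduct_union_taut] at hAS
      rw [hAS]
      refine congrArg (AS 𝒜) (eReduct_congr fun l hl => ?_)
      have hlℓ : l ≠ ℓ := fun h => hfresh (h ▸ hl)
      simp [Set.mem_compl_iff, hlℓ]
    · exact fun l hl => hpos l hl.1
    · intro l hl M hM
      have hlℓ : l ≠ ℓ := fun h => hfresh (h ▸ hl.1)
      refine hneg l ⟨?_, ?_⟩ M hM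
      · rw [elit_union_taut]; exact Or.inl hl.1
      · exact fun h => hl.2 ⟨h, fun hs => hlℓ (Set.mem_singleton_iff.mp hs)⟩
end

section
/- For every ELP Π, the map sending a CWV of Π to the corresponding SE-CWV is a bijection: for each CWV of Π there is exactly one SE-CWV of Π, and vice versa. -/
variable {α : Type*}

section Aux

lemma elit_sub {R : Set (ERule α)} {r : ERule α} (hr : r ∈ R) :
    r.ebody ∪ r.nebody ⊆ elit R := fun l hl => Set.mem_biUnion hr hl

lemma elit_atom {𝒜 : Set α} {R : Set (ERule α)} (hR : ∀ r ∈ R, eruleAtoms r ⊆ 𝒜)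
    {l : α × Bool} (hl : l ∈ elit R) : l.1 ∈ 𝒜 := by
  rcases Set.mem_iUnion₂.1 hl with ⟨r, hr, hlr⟩
  apply hR r hr
  rcases hlr with h | h
  · exact Or.inl (Or.inr ⟨l, h, rfl⟩)
  · exact Or.inr ⟨l, h, rfl⟩

lemma eReduct_eq {R : Set (ERule α)} {K₁ K₂ : Set (α × Bool)}
    (h : ∀ l ∈ elit R, (l ∈ K₁ ↔ l ∈ K₂)) :
    eReduct R K₁ = eReduct R K₂ := by
  have key : ∀ r ∈ R, r.ebody ∩ K₁ = r.ebody ∩ K₂ ∧ (r.nebody ⊆ K₁ ↔ r.nebody ⊆ K₂) := by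
    intro r hr
    refine ⟨?_, ?_, ?_⟩
    · ext l
      constructor
      · rintro ⟨h1, h2⟩; exact ⟨h1, (h l (elit_sub hr (Or.inl h1))).1 h2⟩
      · rintro ⟨h1, h2⟩; exact ⟨h1, (h l (elit_sub hr (Or.inl h1))).2 h2⟩
    · intro hs l hl; exact (h l (elit_sub hr (Or.inr hl))).1 (hs hl)
    · intro hs l hl; exact (h l (elit_sub hr (Or.inr hl))).2 (hs hl)
  ext p
  simp only [eReduct, Set.mem_setOf_eq]
  constructor
  · rintro ⟨r, hr, hne, rfl⟩
    refine ⟨r, hr, (key r hr).2.1 hne, ?_⟩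
    unfold eRuleRed; rw [(key r hr).1]
  · rintro ⟨r, hr, hne, rfl⟩
    refine ⟨r, hr, (key r hr).2.2 hne, ?_⟩
    unfold eRuleRed; rw [(key r hr).1]

lemma satLit_true {M : Set α} {a : α} : satLit M (a, true) ↔ a ∈ M := by simp [satLit]

lemma satLit_false {M : Set α} {a : α} : satLit M (a, false) ↔ a ∉ M := by simp [satLit]

/-- The canonical CWI associated with a collection of answer sets. -/
def Icanon (𝒜 : Set α) (ℳ : Set (Set α)) : Set (α × Bool) :=
  {l | l.1 ∈ 𝒜 ∧ ∀ M ∈ ℳ, satLit M l}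

lemma CWV_eq_Icanon {𝒜 : Set α} {R : Set (ERule α)} {I : Set (α × Bool)}
    (h : CWV 𝒜 R I) : I = Icanon 𝒜 (AS 𝒜 (eReduct R I)) := by
  obtain ⟨⟨hcons, hatoms⟩, hne, h1, h2, h3⟩ := h
  ext ⟨a, b⟩
  constructor
  · intro hm
    refine ⟨hatoms _ hm, fun M hM => ?_⟩
    cases b
    · exact satLit_false.2 (h2 a hm M hM)
    · exact satLit_true.2 (h1 a hm M hM)
  · rintro ⟨ha, hsat⟩
    cases b
    · by_contra hn
      by_cases hf : (a, true) ∈ I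
      · obtain ⟨M, hM⟩ := hne
        exact satLit_false.1 (hsat M hM) (h1 a hf M hM)
      · obtain ⟨M, hM, hMa⟩ := (h3 a ha hf hn).1
        exact satLit_false.1 (hsat M hM) hMa
    · by_contra hn
      by_cases hf : (a, false) ∈ I
      · obtain ⟨M, hM⟩ := hne
        exact h2 a hf M hM (satLit_true.1 (hsat M hM))
      · obtain ⟨M, hM, hMa⟩ := (h3 a ha hn hf).2
        exact hMa (satLit_true.1 (hsat M hM))

end Aux

/-- the map sending a CWV I of an ELP Π to the corresponding
SE-CWV AS(Π^I) is a bijection between the CWVs and the SE-CWVs of Π. -/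
theorem stmt12 (𝒜 : Set α) (R : Set (ERule α))
    (hR : ∀ r ∈ R, eruleAtoms r ⊆ 𝒜) :
    Set.BijOn (fun I : Set (α × Bool) => AS 𝒜 (eReduct R I))
      {I | CWV 𝒜 R I} {ℳ | SECWV 𝒜 R ℳ} :=  by
  classical
  constructor
  · -- MapsTo
    intro I hI
    obtain ⟨⟨hcons, hatoms⟩, hne, h1, h2, h3⟩ := hI
    refine ⟨elit R \ I, Set.diff_subset, ?_, hne, ?_, ?_⟩
    · apply congrArg (AS 𝒜)
      apply eReduct_eq
      intro l hl
      simp only [Set.mem_compl_iff, Set.mem_diff, not_and, not_not]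
      exact ⟨fun h _ => h, fun h => h hl⟩
    · rintro ⟨a, b⟩ ⟨hl, hnI⟩
      have ha : a ∈ 𝒜 := elit_atom hR hl
      cases b
      · by_cases hf : (a, true) ∈ I
        · obtain ⟨M, hM⟩ := hne
          exact ⟨M, hM, fun hs => satLit_false.1 hs (h1 a hf M hM)⟩
        · obtain ⟨M, hM, hMa⟩ := (h3 a ha hf hnI).1
          exact ⟨M, hM, fun hs => satLit_false.1 hs hMa⟩
      · by_cases hf : (a, false) ∈ I
        · obtain ⟨M, hM⟩ := hne
          exact ⟨M, hM, fun hs => h2 a hf M hM (satLit_true.1 hs)⟩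
        · obtain ⟨M, hM, hMa⟩ := (h3 a ha hnI hf).2
          exact ⟨M, hM, fun hs => hMa (satLit_true.1 hs)⟩
    · rintro ⟨a, b⟩ hl M hM
      have hmem : (a, b) ∈ I := by
        rcases hl with ⟨hl1, hl2⟩
        simp only [Set.mem_diff, not_and, not_not] at hl2
        exact hl2 hl1
      cases b
      · exact satLit_false.2 (h2 a hmem M hM)
      · exact satLit_true.2 (h1 a hmem M hM)
  constructor
  · -- InjOn
    intro I₁ h₁ I₂ h₂ heq
    rw [CWV_eq_Icanon h₁, CWV_eq_Icanon h₂]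
    simp only at heq
    rw [heq]
  · -- SurjOn
    rintro ℳ ⟨Φ, hΦ, hAS, hne, hc3, hc4⟩
    set I : Set (α × Bool) := Icanon 𝒜 ℳ with hIdef
    have hiff : ∀ l ∈ elit R, (l ∈ I ↔ l ∈ Φᶜ) := by
      intro l hl
      by_cases hlΦ : l ∈ Φ
      · obtain ⟨M, hM, hns⟩ := hc3 l hlΦ
        exact iff_of_false (fun hlI => hns (hlI.2 M hM)) (fun hc => hc hlΦ)
      · exact iff_of_true ⟨elit_atom hR hl, fun M hM => hc4 l ⟨hl, hlΦ⟩ M hM⟩ hlΦ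
    have hred : AS 𝒜 (eReduct R I) = ℳ := by
      rw [hAS]
      exact congrArg (AS 𝒜) (eReduct_eq hiff)
    have hcwv : CWV 𝒜 R I := by
      refine ⟨⟨?_, ?_⟩, ?_⟩
      · intro a ⟨ht, hf⟩
        obtain ⟨M, hM⟩ := by rw [← hred] at hne; exact hne
        rw [hred] at hM
        exact satLit_false.1 (hf.2 M hM) (satLit_true.1 (ht.2 M hM))
      · exact fun l hl => hl.1
      · rw [hred]
        refine ⟨hne, ?_, ?_, ?_⟩
        · intro a ht M hM; exact satLit_true.1 (ht.2 M hM)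
        · intro a hf M hM; exact satLit_false.1 (hf.2 M hM)
        · intro a ha hnt hnf
          constructor
          · simp only [hIdef, Icanon, Set.mem_setOf_eq, not_and, not_forall] at hnf
            obtain ⟨M, hM, hns⟩ := hnf ha
            exact ⟨M, hM, by_contra fun h => hns (satLit_false.2 h)⟩
          · simp only [hIdef, Icanon, Set.mem_setOf_eq, not_and, not_forall] at hnt
            obtain ⟨M, hM, hns⟩ := hnt ha
            exact ⟨M, hM, by_contra fun h => hns (satLit_true.2 (by_contra h))⟩
    exact ⟨I, hcwv, hred⟩
end
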